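/- For every integer d ≥ 1 and every n ≥ 1, b_{d,2}(2n) equals the number of rooted ordered binary trees with n vertices in which every right edge is assigned one of d possible labels (left edges are unlabeled). -/
import Mathlib


namespace MultiOp

mutual
inductive Atom (d : ℕ) : Type where
  | star : Atom d
  | op : Fin d → Mon d → Atom d
inductive Mon (d : ℕ) : Type where
  | single : Atom d → Mon d
  | cons : Atom d → Mon d → Mon d
end

mutual
def Atom.deg {d : ℕ} : Atom d → ℕ
  | .star => 1
  | .op _ v => v.deg
def Mon.deg {d : ℕ} : Mon d → ℕ
  | .single a => a.deg
  | .cons a v => a.deg + v.deg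
end

mutual
def Atom.mult {d : ℕ} : Atom d → Fin d → ℕ
  | .star, _ => 0
  | .op i v, j => (if i = j then 1 else 0) + v.mult j
def Mon.mult {d : ℕ} : Mon d → Fin d → ℕ
  | .single a, j => a.mult j
  | .cons a v, j => a.mult j + v.mult j
end

noncomputable def a (d r : ℕ) (s : Fin d → ℕ) : ℕ :=
  Nat.card {v : Mon d // v.deg = r ∧ v.mult = s}

noncomputable def b (d ℓ n : ℕ) : ℕ :=
  Nat.card {v : Mon d // ℓ * v.deg + 2 * (∑ i, v.mult i) = n}

noncomputable def A (d : ℕ) : MvPowerSeries (Option (Fin d)) ℚ :=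
  fun e => (a d (e none) (fun i => e (some i)) : ℚ)

noncomputable def B (d ℓ : ℕ) : PowerSeries ℚ :=
  PowerSeries.mk fun n => (b d ℓ n : ℚ)

def narayana (n k : ℕ) : ℚ := (n.choose k * n.choose (k + 1) : ℚ) / n

/-- Rooted ordered binary trees in which every vertex has an optional left child and an
optional right child, and every right edge carries a label in `Fin d`
(left edges are unlabeled). -/
inductive BTree (d : ℕ) : Type where
  | leaf : BTree d
  | left : BTree d → BTree d
  | right : Fin d → BTree d → BTree d
  | both : BTree d → Fin d → BTree d → BTree d

/-- The number of vertices of a labeled binary tree. -/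
def BTree.size {d : ℕ} : BTree d → ℕ
  | .leaf => 1
  | .left l => 1 + l.size
  | .right _ r => 1 + r.size
  | .both l _ r => 1 + l.size + r.size

def monToTree {d : ℕ} : Mon d → BTree d
  | .single .star => .leaf
  | .single (.op i w) => .right i (monToTree w)
  | .cons .star v => .left (monToTree v)
  | .cons (.op i w) v => .both (monToTree v) i (monToTree w)

def treeToMon {d : ℕ} : BTree d → Mon d
  | .leaf => .single .star
  | .right i r => .single (.op i (treeToMon r))
  | .left l => .cons .star (treeToMon l)
  | .both l i r => .cons (.op i (treeToMon r)) (treeToMon l)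

theorem treeToMon_monToTree {d : ℕ} (v : Mon d) : treeToMon (monToTree v) = v := by
  induction v using monToTree.induct <;> simp_all [monToTree, treeToMon]

theorem monToTree_treeToMon {d : ℕ} (t : BTree d) : monToTree (treeToMon t) = t := by
  induction t <;> simp_all [monToTree, treeToMon]

noncomputable def monEquivTree (d : ℕ) : Mon d ≃ BTree d where
  toFun := monToTree
  invFun := treeToMon
  left_inv := treeToMon_monToTree
  right_inv := monToTree_treeToMon

theorem size_monToTree {d : ℕ} (v : Mon d) :
    (monToTree v).size = v.deg + ∑ i, v.mult i := by
  induction v using monToTree.induct with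
  | case1 => simp [monToTree, BTree.size, Mon.deg, Atom.deg, Mon.mult, Atom.mult]
  | case2 i w ih =>
      simp [monToTree, BTree.size, Mon.deg, Atom.deg, Mon.mult, Atom.mult, ih,
        Finset.sum_add_distrib, Finset.sum_ite_eq]
      ring
  | case3 v ih =>
      simp [monToTree, BTree.size, Mon.deg, Atom.deg, Mon.mult, Atom.mult, ih]
      ring
  | case4 i w v ihv ihw =>
      simp [monToTree, BTree.size, Mon.deg, Atom.deg, Mon.mult, Atom.mult, ihv, ihw,
        Finset.sum_add_distrib, Finset.sum_ite_eq]
      ring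

/-- For every `n ≥ 1`, `b_{d,2}(2n)` counts rooted ordered binary trees with `n` vertices
in which every right edge is assigned one of `d` possible labels. -/
theorem b_two_eq_card_btrees (d n : ℕ) (hd : 1 ≤ d) (hn : 1 ≤ n) :
    b d 2 (2 * n) = Nat.card {t : BTree d // t.size = n} := by
  unfold b
  refine Nat.card_eq_of_bijective
    (fun v => ⟨monToTree v.1, by rw [size_monToTree]; have := v.2; omega⟩) ?_
  constructor
  · rintro ⟨v, hv⟩ ⟨w, hw⟩ h
    simp only [Subtype.mk.injEq] at h ⊢
    have := congrArg treeToMon h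
    rwa [treeToMon_monToTree, treeToMon_monToTree] at this
  · rintro ⟨t, ht⟩
    refine ⟨⟨treeToMon t, ?_⟩, ?_⟩
    · have := size_monToTree (treeToMon t)
      rw [monToTree_treeToMon, ht] at this
      omega
    · simp [monToTree_treeToMon]

end MultiOp
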